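/- The assignment L ↦ {u∧v, −(u∧v)}, where (u,v) is any ℤ-basis of L, is independent of the choice of basis and defines a bijection from the set of primitive rank-2 sublattices of ℤ⁴ onto the set of sign-classes {w, −w} of vectors w = (a,b,c,d,e,f) ∈ ℤ⁶ satisfying gcd(a,b,c,d,e,f) = 1 and the Plücker relation af − be + cd = 0. In particular, for any u,v ∈ ℤ⁴ the minors (a,b,c,d,e,f) of (u,v) satisfy af − be + cd = 0, and every coprime integer solution of this equation arises from a basis of a primitive rank-2 sublattice. -/

import Mathlib

/-- The vector of `2 × 2` minors of the pair `(u, v)` of vectors in `ℤ⁴`. -/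
def wedge (u v : Fin 4 → ℤ) : Fin 6 → ℤ :=
  ![u 0 * v 1 - u 1 * v 0, u 0 * v 2 - u 2 * v 0, u 0 * v 3 - u 3 * v 0,
    u 1 * v 2 - u 2 * v 1, u 1 * v 3 - u 3 * v 1, u 2 * v 3 - u 3 * v 2]

/-- `(u, v)` is a `ℤ`-basis of the subgroup `L` of `ℤ⁴`. -/
def IsBasisPair (L : Submodule ℤ (Fin 4 → ℤ)) (u v : Fin 4 → ℤ) : Prop :=
  LinearIndependent ℤ ![u, v] ∧ Submodule.span ℤ ({u, v} : Set (Fin 4 → ℤ)) = L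

/-- `L` is a primitive rank-2 sublattice of `ℤ⁴`: it is free of rank 2 and
saturated, i.e. `(ℚ·L) ∩ ℤ⁴ = L`. -/
def IsPrimitiveRank2 (L : Submodule ℤ (Fin 4 → ℤ)) : Prop :=
  (∃ u v : Fin 4 → ℤ, IsBasisPair L u v) ∧
    ∀ (n : ℤ) (x : Fin 4 → ℤ), n ≠ 0 → n • x ∈ L → x ∈ L

lemma wedge_e0 (u v : Fin 4 → ℤ) : wedge u v 0 = u 0 * v 1 - u 1 * v 0 := rfl
lemma wedge_e1 (u v : Fin 4 → ℤ) : wedge u v 1 = u 0 * v 2 - u 2 * v 0 := rfl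
lemma wedge_e2 (u v : Fin 4 → ℤ) : wedge u v 2 = u 0 * v 3 - u 3 * v 0 := rfl
lemma wedge_e3 (u v : Fin 4 → ℤ) : wedge u v 3 = u 1 * v 2 - u 2 * v 1 := rfl
lemma wedge_e4 (u v : Fin 4 → ℤ) : wedge u v 4 = u 1 * v 3 - u 3 * v 1 := rfl
lemma wedge_e5 (u v : Fin 4 → ℤ) : wedge u v 5 = u 2 * v 3 - u 3 * v 2 := rfl

lemma funext6 {f g : Fin 6 → ℤ} (h0 : f 0 = g 0) (h1 : f 1 = g 1) (h2 : f 2 = g 2)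
    (h3 : f 3 = g 3) (h4 : f 4 = g 4) (h5 : f 5 = g 5) : f = g := by
  funext k; fin_cases k <;> assumption

lemma funext4 {f g : Fin 4 → ℤ} (h0 : f 0 = g 0) (h1 : f 1 = g 1) (h2 : f 2 = g 2)
    (h3 : f 3 = g 3) : f = g := by
  funext k; fin_cases k <;> assumption

lemma wedge_plucker (u v : Fin 4 → ℤ) :
    wedge u v 0 * wedge u v 5 - wedge u v 1 * wedge u v 4 + wedge u v 2 * wedge u v 3 = 0 := by
  simp only [wedge_e0, wedge_e1, wedge_e2, wedge_e3, wedge_e4, wedge_e5]; ring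

lemma wedge_comb (p q r s : ℤ) (u v : Fin 4 → ℤ) :
    wedge (p • u + q • v) (r • u + s • v) = (p * s - q * r) • wedge u v := by
  refine funext6 ?_ ?_ ?_ ?_ ?_ ?_ <;>
    simp only [wedge_e0, wedge_e1, wedge_e2, wedge_e3, wedge_e4, wedge_e5, Pi.add_apply,
      Pi.smul_apply, smul_eq_mul] <;> ring

lemma wedge_swap (u v : Fin 4 → ℤ) : wedge v u = -wedge u v := by
  refine funext6 ?_ ?_ ?_ ?_ ?_ ?_ <;>
    simp only [wedge_e0, wedge_e1, wedge_e2, wedge_e3, wedge_e4, wedge_e5, Pi.neg_apply] <;> ring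

lemma pair_eq {u v : Fin 4 → ℤ} (h : LinearIndependent ℤ ![u, v]) {a b c d : ℤ}
    (e : a • u + b • v = c • u + d • v) : a = c ∧ b = d := by
  rw [LinearIndependent.pair_iff] at h
  have h2 := h (a - c) (b - d) (by rw [sub_smul, sub_smul, sub_add_sub_comm, e, sub_self])
  exact ⟨by linarith [h2.1], by linarith [h2.2]⟩

lemma pair_swap {u v : Fin 4 → ℤ} (h : LinearIndependent ℤ ![u, v]) :
    LinearIndependent ℤ ![v, u] := by
  rw [LinearIndependent.pair_iff] at h ⊢
  intro s t hst
  have := h t s (by rw [add_comm]; exact hst)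
  exact ⟨this.2, this.1⟩

lemma wedge_ne_zero {u v : Fin 4 → ℤ} (h : LinearIndependent ℤ ![u, v]) : wedge u v ≠ 0 := by
  intro h0
  rw [LinearIndependent.pair_iff] at h
  have hw : ∀ k, wedge u v k = 0 := fun k => congrFun h0 k
  have h0 := hw 0; have h1 := hw 1; have h2 := hw 2
  have h3 := hw 3; have h4 := hw 4; have h5 := hw 5
  simp only [wedge_e0, wedge_e1, wedge_e2, wedge_e3, wedge_e4, wedge_e5] at h0 h1 h2 h3 h4 h5
  by_cases hu : u = 0
  · exact one_ne_zero (h 1 0 (by simp [hu])).1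
  · obtain ⟨i, hi⟩ : ∃ i, u i ≠ 0 := by
      by_contra hc; push_neg at hc; exact hu (funext hc)
    refine hi ?_
    fin_cases i
    · refine (h (-v 0) (u 0) (funext4 ?_ ?_ ?_ ?_)).2 <;>
        simp only [Pi.add_apply, Pi.smul_apply, Pi.neg_apply, smul_eq_mul, Pi.zero_apply] <;> linarith
    · refine (h (-v 1) (u 1) (funext4 ?_ ?_ ?_ ?_)).2 <;>
        simp only [Pi.add_apply, Pi.smul_apply, Pi.neg_apply, smul_eq_mul, Pi.zero_apply] <;> linarith
    · refine (h (-v 2) (u 2) (funext4 ?_ ?_ ?_ ?_)).2 <;>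
        simp only [Pi.add_apply, Pi.smul_apply, Pi.neg_apply, smul_eq_mul, Pi.zero_apply] <;> linarith
    · refine (h (-v 3) (u 3) (funext4 ?_ ?_ ?_ ?_)).2 <;>
        simp only [Pi.add_apply, Pi.smul_apply, Pi.neg_apply, smul_eq_mul, Pi.zero_apply] <;> linarith

def pc (w : Fin 6 → ℤ) (x : Fin 4 → ℤ) : Prop :=
  w 0 * x 2 - w 1 * x 1 + w 3 * x 0 = 0 ∧
  w 0 * x 3 - w 2 * x 1 + w 4 * x 0 = 0 ∧
  w 1 * x 3 - w 2 * x 2 + w 5 * x 0 = 0 ∧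
  w 3 * x 3 - w 4 * x 2 + w 5 * x 1 = 0

def Lw (w : Fin 6 → ℤ) : Submodule ℤ (Fin 4 → ℤ) where
  carrier := {x | pc w x}
  add_mem' := by
    rintro a b ⟨a1, a2, a3, a4⟩ ⟨b1, b2, b3, b4⟩
    refine ⟨?_, ?_, ?_, ?_⟩ <;> simp only [Pi.add_apply] <;>
      [linear_combination a1 + b1; linear_combination a2 + b2;
       linear_combination a3 + b3; linear_combination a4 + b4]
  zero_mem' := by refine ⟨?_, ?_, ?_, ?_⟩ <;> simp
  smul_mem' := by
    rintro c x ⟨h1, h2, h3, h4⟩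
    refine ⟨?_, ?_, ?_, ?_⟩ <;> simp only [Pi.smul_apply, smul_eq_mul] <;>
      [linear_combination c * h1; linear_combination c * h2;
       linear_combination c * h3; linear_combination c * h4]

lemma pc_of_mem {w : Fin 6 → ℤ} {x : Fin 4 → ℤ} (h : x ∈ Lw w) : pc w x := h

lemma pc_mem {w : Fin 6 → ℤ} {x : Fin 4 → ℤ} (h : pc w x) : x ∈ Lw w := h

lemma Lw_saturated (w : Fin 6 → ℤ) :
    ∀ (n : ℤ) (x : Fin 4 → ℤ), n ≠ 0 → n • x ∈ Lw w → x ∈ Lw w := by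
  intro n x hn hx
  obtain ⟨h1, h2, h3, h4⟩ := pc_of_mem hx
  simp only [Pi.smul_apply, smul_eq_mul] at h1 h2 h3 h4
  refine pc_mem ⟨mul_left_cancel₀ hn ?_, mul_left_cancel₀ hn ?_,
    mul_left_cancel₀ hn ?_, mul_left_cancel₀ hn ?_⟩ <;>
    [linear_combination h1; linear_combination h2; linear_combination h3; linear_combination h4]

lemma pc_wedge_of_mem {u v x : Fin 4 → ℤ}
    (h : x ∈ Submodule.span ℤ ({u, v} : Set (Fin 4 → ℤ))) : pc (wedge u v) x := by
  obtain ⟨a, b, rfl⟩ := Submodule.mem_span_pair.mp h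
  refine ⟨?_, ?_, ?_, ?_⟩ <;>
    simp only [wedge_e0, wedge_e1, wedge_e2, wedge_e3, wedge_e4, wedge_e5, Pi.add_apply,
      Pi.smul_apply, smul_eq_mul] <;> ring

lemma pc_neg {w : Fin 6 → ℤ} {x : Fin 4 → ℤ} (h : pc w x) : pc (-w) x := by
  obtain ⟨h1, h2, h3, h4⟩ := h
  refine ⟨?_, ?_, ?_, ?_⟩ <;> simp only [Pi.neg_apply] <;> linarith

lemma mem_of_pc {L : Submodule ℤ (Fin 4 → ℤ)} {u v x : Fin 4 → ℤ}
    (hli : LinearIndependent ℤ ![u, v])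
    (hspan : Submodule.span ℤ ({u, v} : Set (Fin 4 → ℤ)) = L)
    (hsat : ∀ (n : ℤ) (y : Fin 4 → ℤ), n ≠ 0 → n • y ∈ L → y ∈ L)
    (hc : pc (wedge u v) x) : x ∈ L := by
  obtain ⟨h1, h2, h3, h4⟩ := hc
  simp only [wedge_e0, wedge_e1, wedge_e2, wedge_e3, wedge_e4, wedge_e5] at h1 h2 h3 h4
  have huL : u ∈ Submodule.span ℤ ({u, v} : Set (Fin 4 → ℤ)) :=
    Submodule.subset_span (Set.mem_insert _ _)
  have hvL : v ∈ Submodule.span ℤ ({u, v} : Set (Fin 4 → ℤ)) :=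
    Submodule.subset_span (Set.mem_insert_of_mem _ rfl)
  have hor : wedge u v 0 ≠ 0 ∨ wedge u v 1 ≠ 0 ∨ wedge u v 2 ≠ 0 ∨ wedge u v 3 ≠ 0 ∨
      wedge u v 4 ≠ 0 ∨ wedge u v 5 ≠ 0 := by
    by_contra hcon
    push_neg at hcon
    obtain ⟨n0, n1, n2, n3, n4, n5⟩ := hcon
    exact wedge_ne_zero hli (funext6 (by simpa using n0) (by simpa using n1) (by simpa using n2)
      (by simpa using n3) (by simpa using n4) (by simpa using n5))
  rcases hor with hk | hk | hk | hk | hk | hk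
  · have key : wedge u v 0 • x = (x 0 * v 1 - x 1 * v 0) • u + (u 0 * x 1 - u 1 * x 0) • v := by
      refine funext4 ?_ ?_ ?_ ?_
      · show (u 0 * v 1 - u 1 * v 0) * x 0 = (x 0 * v 1 - x 1 * v 0) * u 0 + (u 0 * x 1 - u 1 * x 0) * v 0
        ring
      · show (u 0 * v 1 - u 1 * v 0) * x 1 = (x 0 * v 1 - x 1 * v 0) * u 1 + (u 0 * x 1 - u 1 * x 0) * v 1
        ring
      · show (u 0 * v 1 - u 1 * v 0) * x 2 = (x 0 * v 1 - x 1 * v 0) * u 2 + (u 0 * x 1 - u 1 * x 0) * v 2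
        linear_combination h1
      · show (u 0 * v 1 - u 1 * v 0) * x 3 = (x 0 * v 1 - x 1 * v 0) * u 3 + (u 0 * x 1 - u 1 * x 0) * v 3
        linear_combination h2
    exact hsat _ x hk (by rw [key, ← hspan]; exact add_mem (Submodule.smul_mem _ _ huL) (Submodule.smul_mem _ _ hvL))
  · have key : wedge u v 1 • x = (x 0 * v 2 - x 2 * v 0) • u + (u 0 * x 2 - u 2 * x 0) • v := by
      refine funext4 ?_ ?_ ?_ ?_
      · show (u 0 * v 2 - u 2 * v 0) * x 0 = (x 0 * v 2 - x 2 * v 0) * u 0 + (u 0 * x 2 - u 2 * x 0) * v 0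
        ring
      · show (u 0 * v 2 - u 2 * v 0) * x 1 = (x 0 * v 2 - x 2 * v 0) * u 1 + (u 0 * x 2 - u 2 * x 0) * v 1
        linear_combination -h1
      · show (u 0 * v 2 - u 2 * v 0) * x 2 = (x 0 * v 2 - x 2 * v 0) * u 2 + (u 0 * x 2 - u 2 * x 0) * v 2
        ring
      · show (u 0 * v 2 - u 2 * v 0) * x 3 = (x 0 * v 2 - x 2 * v 0) * u 3 + (u 0 * x 2 - u 2 * x 0) * v 3
        linear_combination h3
    exact hsat _ x hk (by rw [key, ← hspan]; exact add_mem (Submodule.smul_mem _ _ huL) (Submodule.smul_mem _ _ hvL))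
  · have key : wedge u v 2 • x = (x 0 * v 3 - x 3 * v 0) • u + (u 0 * x 3 - u 3 * x 0) • v := by
      refine funext4 ?_ ?_ ?_ ?_
      · show (u 0 * v 3 - u 3 * v 0) * x 0 = (x 0 * v 3 - x 3 * v 0) * u 0 + (u 0 * x 3 - u 3 * x 0) * v 0
        ring
      · show (u 0 * v 3 - u 3 * v 0) * x 1 = (x 0 * v 3 - x 3 * v 0) * u 1 + (u 0 * x 3 - u 3 * x 0) * v 1
        linear_combination -h2
      · show (u 0 * v 3 - u 3 * v 0) * x 2 = (x 0 * v 3 - x 3 * v 0) * u 2 + (u 0 * x 3 - u 3 * x 0) * v 2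
        linear_combination -h3
      · show (u 0 * v 3 - u 3 * v 0) * x 3 = (x 0 * v 3 - x 3 * v 0) * u 3 + (u 0 * x 3 - u 3 * x 0) * v 3
        ring
    exact hsat _ x hk (by rw [key, ← hspan]; exact add_mem (Submodule.smul_mem _ _ huL) (Submodule.smul_mem _ _ hvL))
  · have key : wedge u v 3 • x = (x 1 * v 2 - x 2 * v 1) • u + (u 1 * x 2 - u 2 * x 1) • v := by
      refine funext4 ?_ ?_ ?_ ?_
      · show (u 1 * v 2 - u 2 * v 1) * x 0 = (x 1 * v 2 - x 2 * v 1) * u 0 + (u 1 * x 2 - u 2 * x 1) * v 0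
        linear_combination h1
      · show (u 1 * v 2 - u 2 * v 1) * x 1 = (x 1 * v 2 - x 2 * v 1) * u 1 + (u 1 * x 2 - u 2 * x 1) * v 1
        ring
      · show (u 1 * v 2 - u 2 * v 1) * x 2 = (x 1 * v 2 - x 2 * v 1) * u 2 + (u 1 * x 2 - u 2 * x 1) * v 2
        ring
      · show (u 1 * v 2 - u 2 * v 1) * x 3 = (x 1 * v 2 - x 2 * v 1) * u 3 + (u 1 * x 2 - u 2 * x 1) * v 3
        linear_combination h4
    exact hsat _ x hk (by rw [key, ← hspan]; exact add_mem (Submodule.smul_mem _ _ huL) (Submodule.smul_mem _ _ hvL))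
  · have key : wedge u v 4 • x = (x 1 * v 3 - x 3 * v 1) • u + (u 1 * x 3 - u 3 * x 1) • v := by
      refine funext4 ?_ ?_ ?_ ?_
      · show (u 1 * v 3 - u 3 * v 1) * x 0 = (x 1 * v 3 - x 3 * v 1) * u 0 + (u 1 * x 3 - u 3 * x 1) * v 0
        linear_combination h2
      · show (u 1 * v 3 - u 3 * v 1) * x 1 = (x 1 * v 3 - x 3 * v 1) * u 1 + (u 1 * x 3 - u 3 * x 1) * v 1
        ring
      · show (u 1 * v 3 - u 3 * v 1) * x 2 = (x 1 * v 3 - x 3 * v 1) * u 2 + (u 1 * x 3 - u 3 * x 1) * v 2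
        linear_combination -h4
      · show (u 1 * v 3 - u 3 * v 1) * x 3 = (x 1 * v 3 - x 3 * v 1) * u 3 + (u 1 * x 3 - u 3 * x 1) * v 3
        ring
    exact hsat _ x hk (by rw [key, ← hspan]; exact add_mem (Submodule.smul_mem _ _ huL) (Submodule.smul_mem _ _ hvL))
  · have key : wedge u v 5 • x = (x 2 * v 3 - x 3 * v 2) • u + (u 2 * x 3 - u 3 * x 2) • v := by
      refine funext4 ?_ ?_ ?_ ?_
      · show (u 2 * v 3 - u 3 * v 2) * x 0 = (x 2 * v 3 - x 3 * v 2) * u 0 + (u 2 * x 3 - u 3 * x 2) * v 0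
        linear_combination h3
      · show (u 2 * v 3 - u 3 * v 2) * x 1 = (x 2 * v 3 - x 3 * v 2) * u 1 + (u 2 * x 3 - u 3 * x 2) * v 1
        linear_combination h4
      · show (u 2 * v 3 - u 3 * v 2) * x 2 = (x 2 * v 3 - x 3 * v 2) * u 2 + (u 2 * x 3 - u 3 * x 2) * v 2
        ring
      · show (u 2 * v 3 - u 3 * v 2) * x 3 = (x 2 * v 3 - x 3 * v 2) * u 3 + (u 2 * x 3 - u 3 * x 2) * v 3
        ring
    exact hsat _ x hk (by rw [key, ← hspan]; exact add_mem (Submodule.smul_mem _ _ huL) (Submodule.smul_mem _ _ hvL))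

lemma gcd_wedge {L : Submodule ℤ (Fin 4 → ℤ)} {u v : Fin 4 → ℤ}
    (hsat : ∀ (n : ℤ) (y : Fin 4 → ℤ), n ≠ 0 → n • y ∈ L → y ∈ L)
    (hli : LinearIndependent ℤ ![u, v])
    (hspan : Submodule.span ℤ ({u, v} : Set (Fin 4 → ℤ)) = L) :
    Finset.univ.gcd (wedge u v) = 1 := by
  have huL : u ∈ L := by rw [← hspan]; exact Submodule.subset_span (Set.mem_insert _ _)
  have hvL : v ∈ L := by rw [← hspan]; exact Submodule.subset_span (Set.mem_insert_of_mem _ rfl)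
  have hgnn : 0 ≤ Finset.univ.gcd (wedge u v) := by
    have h := Finset.normalize_gcd (s := (Finset.univ : Finset (Fin 6))) (f := wedge u v)
    calc (0 : ℤ) ≤ |Finset.univ.gcd (wedge u v)| := abs_nonneg _
      _ = _ := by rw [Int.abs_eq_normalize, h]
  by_contra hne1
  have hnat : (Finset.univ.gcd (wedge u v)).natAbs ≠ 1 := fun h => hne1 (by omega)
  obtain ⟨p, hp, hpg⟩ := Int.exists_prime_and_dvd hnat
  have hpw : ∀ n, p ∣ wedge u v n := fun n => hpg.trans (Finset.gcd_dvd (Finset.mem_univ n))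
  have hp0 : p ≠ 0 := hp.ne_zero
  by_cases h0 : p ∣ u 0
  · by_cases h1 : p ∣ u 1
    · by_cases h2 : p ∣ u 2
      · by_cases h3 : p ∣ u 3
        · -- all coordinates divisible
          obtain ⟨x0, hx0⟩ := h0
          obtain ⟨x1, hx1⟩ := h1
          obtain ⟨x2, hx2⟩ := h2
          obtain ⟨x3, hx3⟩ := h3
          have hpx : p • (![x0, x1, x2, x3] : Fin 4 → ℤ) = u := by
            refine funext4 ?_ ?_ ?_ ?_
            · show p * x0 = u 0; linear_combination -hx0
            · show p * x1 = u 1; linear_combination -hx1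
            · show p * x2 = u 2; linear_combination -hx2
            · show p * x3 = u 3; linear_combination -hx3
          have hxL : (![x0, x1, x2, x3] : Fin 4 → ℤ) ∈ L :=
            hsat p _ hp0 (by rw [hpx]; exact huL)
          rw [← hspan] at hxL
          obtain ⟨α, β, hαβ⟩ := Submodule.mem_span_pair.mp hxL
          have heq : (1 : ℤ) • u + (0 : ℤ) • v = (p * α) • u + (p * β) • v := by
            calc (1 : ℤ) • u + (0 : ℤ) • v = u := by module
              _ = p • (![x0, x1, x2, x3] : Fin 4 → ℤ) := hpx.symm
              _ = p • (α • u + β • v) := by rw [hαβ]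
              _ = (p * α) • u + (p * β) • v := by module
          exact hp.not_isUnit (IsUnit.of_mul_eq_one (a := p) α (pair_eq hli heq).1.symm)
        · -- p does not divide u 3
          obtain ⟨x0, hx0⟩ : p ∣ u 3 * v 0 - v 3 * u 0 := by
            obtain ⟨c, hc⟩ := hpw 2; rw [wedge_e2] at hc; exact ⟨-c, by linear_combination -hc⟩
          obtain ⟨x1, hx1⟩ : p ∣ u 3 * v 1 - v 3 * u 1 := by
            obtain ⟨c, hc⟩ := hpw 4; rw [wedge_e4] at hc; exact ⟨-c, by linear_combination -hc⟩
          obtain ⟨x2, hx2⟩ : p ∣ u 3 * v 2 - v 3 * u 2 := by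
            obtain ⟨c, hc⟩ := hpw 5; rw [wedge_e5] at hc; exact ⟨-c, by linear_combination -hc⟩
          obtain ⟨x3, hx3⟩ : p ∣ u 3 * v 3 - v 3 * u 3 := ⟨0, by ring⟩
          have hpx : p • (![x0, x1, x2, x3] : Fin 4 → ℤ) = u 3 • v - v 3 • u := by
            refine funext4 ?_ ?_ ?_ ?_
            · show p * x0 = u 3 * v 0 - v 3 * u 0; linear_combination -hx0
            · show p * x1 = u 3 * v 1 - v 3 * u 1; linear_combination -hx1
            · show p * x2 = u 3 * v 2 - v 3 * u 2; linear_combination -hx2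
            · show p * x3 = u 3 * v 3 - v 3 * u 3; linear_combination -hx3
          have hxL : (![x0, x1, x2, x3] : Fin 4 → ℤ) ∈ L :=
            hsat p _ hp0 (by rw [hpx]; exact sub_mem (L.smul_mem _ hvL) (L.smul_mem _ huL))
          rw [← hspan] at hxL
          obtain ⟨α, β, hαβ⟩ := Submodule.mem_span_pair.mp hxL
          have heq : (-(v 3)) • u + (u 3) • v = (p * α) • u + (p * β) • v := by
            calc (-(v 3)) • u + (u 3) • v = u 3 • v - v 3 • u := by module
              _ = p • (![x0, x1, x2, x3] : Fin 4 → ℤ) := hpx.symm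
              _ = p • (α • u + β • v) := by rw [hαβ]
              _ = (p * α) • u + (p * β) • v := by module
          exact h3 ⟨β, (pair_eq hli heq).2⟩
      · -- p does not divide u 2
        obtain ⟨x0, hx0⟩ : p ∣ u 2 * v 0 - v 2 * u 0 := by
          obtain ⟨c, hc⟩ := hpw 1; rw [wedge_e1] at hc; exact ⟨-c, by linear_combination -hc⟩
        obtain ⟨x1, hx1⟩ : p ∣ u 2 * v 1 - v 2 * u 1 := by
          obtain ⟨c, hc⟩ := hpw 3; rw [wedge_e3] at hc; exact ⟨-c, by linear_combination -hc⟩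
        obtain ⟨x2, hx2⟩ : p ∣ u 2 * v 2 - v 2 * u 2 := ⟨0, by ring⟩
        obtain ⟨x3, hx3⟩ : p ∣ u 2 * v 3 - v 2 * u 3 := by
          obtain ⟨c, hc⟩ := hpw 5; rw [wedge_e5] at hc; exact ⟨c, by linear_combination hc⟩
        have hpx : p • (![x0, x1, x2, x3] : Fin 4 → ℤ) = u 2 • v - v 2 • u := by
          refine funext4 ?_ ?_ ?_ ?_
          · show p * x0 = u 2 * v 0 - v 2 * u 0; linear_combination -hx0
          · show p * x1 = u 2 * v 1 - v 2 * u 1; linear_combination -hx1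
          · show p * x2 = u 2 * v 2 - v 2 * u 2; linear_combination -hx2
          · show p * x3 = u 2 * v 3 - v 2 * u 3; linear_combination -hx3
        have hxL : (![x0, x1, x2, x3] : Fin 4 → ℤ) ∈ L :=
          hsat p _ hp0 (by rw [hpx]; exact sub_mem (L.smul_mem _ hvL) (L.smul_mem _ huL))
        rw [← hspan] at hxL
        obtain ⟨α, β, hαβ⟩ := Submodule.mem_span_pair.mp hxL
        have heq : (-(v 2)) • u + (u 2) • v = (p * α) • u + (p * β) • v := by
          calc (-(v 2)) • u + (u 2) • v = u 2 • v - v 2 • u := by module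
            _ = p • (![x0, x1, x2, x3] : Fin 4 → ℤ) := hpx.symm
            _ = p • (α • u + β • v) := by rw [hαβ]
            _ = (p * α) • u + (p * β) • v := by module
        exact h2 ⟨β, (pair_eq hli heq).2⟩
    · -- p does not divide u 1
      obtain ⟨x0, hx0⟩ : p ∣ u 1 * v 0 - v 1 * u 0 := by
        obtain ⟨c, hc⟩ := hpw 0; rw [wedge_e0] at hc; exact ⟨-c, by linear_combination -hc⟩
      obtain ⟨x1, hx1⟩ : p ∣ u 1 * v 1 - v 1 * u 1 := ⟨0, by ring⟩
      obtain ⟨x2, hx2⟩ : p ∣ u 1 * v 2 - v 1 * u 2 := by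
        obtain ⟨c, hc⟩ := hpw 3; rw [wedge_e3] at hc; exact ⟨c, by linear_combination hc⟩
      obtain ⟨x3, hx3⟩ : p ∣ u 1 * v 3 - v 1 * u 3 := by
        obtain ⟨c, hc⟩ := hpw 4; rw [wedge_e4] at hc; exact ⟨c, by linear_combination hc⟩
      have hpx : p • (![x0, x1, x2, x3] : Fin 4 → ℤ) = u 1 • v - v 1 • u := by
        refine funext4 ?_ ?_ ?_ ?_
        · show p * x0 = u 1 * v 0 - v 1 * u 0; linear_combination -hx0
        · show p * x1 = u 1 * v 1 - v 1 * u 1; linear_combination -hx1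
        · show p * x2 = u 1 * v 2 - v 1 * u 2; linear_combination -hx2
        · show p * x3 = u 1 * v 3 - v 1 * u 3; linear_combination -hx3
      have hxL : (![x0, x1, x2, x3] : Fin 4 → ℤ) ∈ L :=
        hsat p _ hp0 (by rw [hpx]; exact sub_mem (L.smul_mem _ hvL) (L.smul_mem _ huL))
      rw [← hspan] at hxL
      obtain ⟨α, β, hαβ⟩ := Submodule.mem_span_pair.mp hxL
      have heq : (-(v 1)) • u + (u 1) • v = (p * α) • u + (p * β) • v := by
        calc (-(v 1)) • u + (u 1) • v = u 1 • v - v 1 • u := by module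
          _ = p • (![x0, x1, x2, x3] : Fin 4 → ℤ) := hpx.symm
          _ = p • (α • u + β • v) := by rw [hαβ]
          _ = (p * α) • u + (p * β) • v := by module
      exact h1 ⟨β, (pair_eq hli heq).2⟩
  · -- p does not divide u 0
    obtain ⟨x0, hx0⟩ : p ∣ u 0 * v 0 - v 0 * u 0 := ⟨0, by ring⟩
    obtain ⟨x1, hx1⟩ : p ∣ u 0 * v 1 - v 0 * u 1 := by
      obtain ⟨c, hc⟩ := hpw 0; rw [wedge_e0] at hc; exact ⟨c, by linear_combination hc⟩
    obtain ⟨x2, hx2⟩ : p ∣ u 0 * v 2 - v 0 * u 2 := by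
      obtain ⟨c, hc⟩ := hpw 1; rw [wedge_e1] at hc; exact ⟨c, by linear_combination hc⟩
    obtain ⟨x3, hx3⟩ : p ∣ u 0 * v 3 - v 0 * u 3 := by
      obtain ⟨c, hc⟩ := hpw 2; rw [wedge_e2] at hc; exact ⟨c, by linear_combination hc⟩
    have hpx : p • (![x0, x1, x2, x3] : Fin 4 → ℤ) = u 0 • v - v 0 • u := by
      refine funext4 ?_ ?_ ?_ ?_
      · show p * x0 = u 0 * v 0 - v 0 * u 0; linear_combination -hx0
      · show p * x1 = u 0 * v 1 - v 0 * u 1; linear_combination -hx1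
      · show p * x2 = u 0 * v 2 - v 0 * u 2; linear_combination -hx2
      · show p * x3 = u 0 * v 3 - v 0 * u 3; linear_combination -hx3
    have hxL : (![x0, x1, x2, x3] : Fin 4 → ℤ) ∈ L :=
      hsat p _ hp0 (by rw [hpx]; exact sub_mem (L.smul_mem _ hvL) (L.smul_mem _ huL))
    rw [← hspan] at hxL
    obtain ⟨α, β, hαβ⟩ := Submodule.mem_span_pair.mp hxL
    have heq : (-(v 0)) • u + (u 0) • v = (p * α) • u + (p * β) • v := by
      calc (-(v 0)) • u + (u 0) • v = u 0 • v - v 0 • u := by module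
        _ = p • (![x0, x1, x2, x3] : Fin 4 → ℤ) := hpx.symm
        _ = p • (α • u + β • v) := by rw [hαβ]
        _ = (p * α) • u + (p * β) • v := by module
    exact h0 ⟨β, (pair_eq hli heq).2⟩
lemma surj_pivot {w : Fin 6 → ℤ} (i j : Fin 4)
    (hg : Finset.univ.gcd w = 1) {m : ℤ} (hm : m ≠ 0)
    {u₀ v₀ : Fin 4 → ℤ}
    (hu0 : u₀ ∈ Lw w) (hv0 : v₀ ∈ Lw w)
    (hli0 : LinearIndependent ℤ ![u₀, v₀])
    (hw0 : wedge u₀ v₀ = m • w)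
    (hinj : ∀ x ∈ Lw w, x i = 0 → x j = 0 → x = 0) :
    ∃ (L : Submodule ℤ (Fin 4 → ℤ)) (u v : Fin 4 → ℤ),
      IsPrimitiveRank2 L ∧ IsBasisPair L u v ∧ wedge u v = w := by
  classical
  obtain ⟨n, B⟩ := Submodule.basisOfPid (Pi.basisFun ℤ (Fin 4)) (Lw w)
  haveI : Module.Finite ℤ (Lw w) := Module.Finite.of_basis B
  have hrank : Module.finrank ℤ (Lw w) = n := by
    rw [Module.finrank_eq_card_basis B, Fintype.card_fin]
  have hfam : LinearIndependent ℤ (![(⟨u₀, hu0⟩ : Lw w), ⟨v₀, hv0⟩]) := by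
    apply LinearIndependent.of_comp (Lw w).subtype
    have hco : (⇑(Lw w).subtype ∘ ![(⟨u₀, hu0⟩ : Lw w), ⟨v₀, hv0⟩]) = ![u₀, v₀] := by
      funext l; fin_cases l <;> rfl
    rw [hco]; exact hli0
  have h2n : 2 ≤ Module.finrank ℤ (Lw w) := by
    simpa using hfam.fintype_card_le_finrank
  have hn2 : Module.finrank ℤ (Lw w) ≤ 2 := by
    have hφinj : Function.Injective ((LinearMap.funLeft ℤ ℤ ![i, j]).comp (Lw w).subtype) := by
      intro x y hxy
      have hxy' : (x : Fin 4 → ℤ) ∘ ![i, j] = (y : Fin 4 → ℤ) ∘ ![i, j] := hxy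
      have hzi : ((x : Fin 4 → ℤ) - y) i = 0 := by
        have := congrFun hxy' 0
        simp only [Function.comp_apply] at this
        simp only [Pi.sub_apply]
        simpa using sub_eq_zero.mpr this
      have hzj : ((x : Fin 4 → ℤ) - y) j = 0 := by
        have := congrFun hxy' 1
        simp only [Function.comp_apply] at this
        simp only [Pi.sub_apply]
        simpa using sub_eq_zero.mpr this
      have hz := hinj _ (sub_mem x.2 y.2) hzi hzj
      exact Subtype.ext (by rwa [sub_eq_zero] at hz)
    have hle := LinearMap.finrank_le_finrank_of_injective hφinj
    simpa [Module.finrank_pi] using hle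
  have hn : n = 2 := by rw [hrank] at h2n hn2; omega
  let B2 : Module.Basis (Fin 2) ℤ (Lw w) := B.reindex (finCongr hn)
  set u : Fin 4 → ℤ := ↑(B2 0) with hu_def
  set v : Fin 4 → ℤ := ↑(B2 1) with hv_def
  have hcomp : (⇑(Lw w).subtype ∘ ⇑B2) = ![u, v] := by
    funext l; fin_cases l <;> rfl
  have hli : LinearIndependent ℤ ![u, v] := by
    rw [← hcomp]; exact B2.linearIndependent.map' (Lw w).subtype (Lw w).ker_subtype
  have hspan : Submodule.span ℤ ({u, v} : Set (Fin 4 → ℤ)) = Lw w := by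
    have h1 : Set.range (⇑(Lw w).subtype ∘ ⇑B2) = ({u, v} : Set (Fin 4 → ℤ)) := by
      rw [hcomp]; ext y
      simp only [Set.mem_range, Set.mem_insert_iff, Set.mem_singleton_iff]
      constructor
      · rintro ⟨l, rfl⟩; fin_cases l <;> simp
      · rintro (rfl | rfl); exacts [⟨0, rfl⟩, ⟨1, rfl⟩]
    rw [← h1, Set.range_comp, Submodule.span_image, B2.span_eq, Submodule.map_subtype_top]
  have hbp : IsBasisPair (Lw w) u v := ⟨hli, hspan⟩
  have hsat := Lw_saturated w
  have hprim : IsPrimitiveRank2 (Lw w) := ⟨⟨u, v, hbp⟩, hsat⟩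
  have hgcdW : Finset.univ.gcd (wedge u v) = 1 := gcd_wedge hsat hli hspan
  obtain ⟨p, q, hpq⟩ := Submodule.mem_span_pair.mp (show u₀ ∈ _ by rw [hspan]; exact hu0)
  obtain ⟨r, s, hrs⟩ := Submodule.mem_span_pair.mp (show v₀ ∈ _ by rw [hspan]; exact hv0)
  have hmw : (p * s - q * r) • wedge u v = m • w := by
    rw [← wedge_comb p q r s u v, hpq, hrs, hw0]
  have hnorm : normalize (p * s - q * r) * Finset.univ.gcd (wedge u v)
      = normalize m * Finset.univ.gcd w := by
    rw [← Finset.gcd_mul_left, ← Finset.gcd_mul_left]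
    exact Finset.gcd_congr rfl fun k _ => by simpa using congrFun hmw k
  have habs : |p * s - q * r| = |m| := by
    rw [hgcdW, hg, mul_one, mul_one] at hnorm
    rw [Int.abs_eq_normalize, Int.abs_eq_normalize, hnorm]
  rcases abs_eq_abs.mp habs with hDm | hDm
  · refine ⟨Lw w, u, v, hprim, hbp, ?_⟩
    funext k
    have hc := congrFun hmw k
    simp only [Pi.smul_apply, smul_eq_mul] at hc
    rw [hDm] at hc
    exact mul_left_cancel₀ hm hc
  · refine ⟨Lw w, v, u, hprim, ⟨pair_swap hli, by rw [Set.pair_comm]; exact hspan⟩, ?_⟩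
    rw [wedge_swap]
    funext k
    have hc := congrFun hmw k
    simp only [Pi.smul_apply, smul_eq_mul] at hc
    rw [hDm] at hc
    simp only [Pi.neg_apply]
    have hc2 : m * -wedge u v k = m * w k := by linear_combination hc
    exact mul_left_cancel₀ hm hc2

/-- `L ↦ {u∧v, −(u∧v)}` is well defined and is a bijection from
primitive rank-2 sublattices of `ℤ⁴` onto sign-classes of coprime integer
vectors `(a,b,c,d,e,f)` satisfying the Plücker relation `af − be + cd = 0`. -/
theorem pluecker_bijection :
    -- every wedge satisfies the Plücker relation
    (∀ u v : Fin 4 → ℤ,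
      wedge u v 0 * wedge u v 5 - wedge u v 1 * wedge u v 4 +
        wedge u v 2 * wedge u v 3 = 0) ∧
    -- the sign-class of the wedge is independent of the choice of basis
    (∀ (L : Submodule ℤ (Fin 4 → ℤ)) (u v u' v' : Fin 4 → ℤ),
      IsBasisPair L u v → IsBasisPair L u' v' →
        wedge u' v' = wedge u v ∨ wedge u' v' = -wedge u v) ∧
    -- for primitive lattices the wedge has coprime coordinates
    (∀ (L : Submodule ℤ (Fin 4 → ℤ)) (u v : Fin 4 → ℤ),
      IsPrimitiveRank2 L → IsBasisPair L u v → Finset.univ.gcd (wedge u v) = 1) ∧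
    -- injectivity
    (∀ (L L' : Submodule ℤ (Fin 4 → ℤ)) (u v u' v' : Fin 4 → ℤ),
      IsPrimitiveRank2 L → IsPrimitiveRank2 L' →
      IsBasisPair L u v → IsBasisPair L' u' v' →
      (wedge u' v' = wedge u v ∨ wedge u' v' = -wedge u v) → L = L') ∧
    -- surjectivity
    (∀ w : Fin 6 → ℤ, Finset.univ.gcd w = 1 →
      w 0 * w 5 - w 1 * w 4 + w 2 * w 3 = 0 →
      ∃ (L : Submodule ℤ (Fin 4 → ℤ)) (u v : Fin 4 → ℤ),
        IsPrimitiveRank2 L ∧ IsBasisPair L u v ∧ wedge u v = w) := by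
  refine ⟨wedge_plucker, ?_, ?_, ?_, ?_⟩
  · -- basis independence
    rintro L u v u' v' ⟨hli, hsp⟩ ⟨hli', hsp'⟩
    have hu' : u' ∈ Submodule.span ℤ ({u, v} : Set (Fin 4 → ℤ)) := by
      rw [hsp, ← hsp']; exact Submodule.subset_span (Set.mem_insert _ _)
    have hv' : v' ∈ Submodule.span ℤ ({u, v} : Set (Fin 4 → ℤ)) := by
      rw [hsp, ← hsp']; exact Submodule.subset_span (Set.mem_insert_of_mem _ rfl)
    have hu : u ∈ Submodule.span ℤ ({u', v'} : Set (Fin 4 → ℤ)) := by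
      rw [hsp', ← hsp]; exact Submodule.subset_span (Set.mem_insert _ _)
    have hv : v ∈ Submodule.span ℤ ({u', v'} : Set (Fin 4 → ℤ)) := by
      rw [hsp', ← hsp]; exact Submodule.subset_span (Set.mem_insert_of_mem _ rfl)
    obtain ⟨p, q, hpq⟩ := Submodule.mem_span_pair.mp hu'
    obtain ⟨r, s, hrs⟩ := Submodule.mem_span_pair.mp hv'
    obtain ⟨p', q', hp'⟩ := Submodule.mem_span_pair.mp hu
    obtain ⟨r', s', hr'⟩ := Submodule.mem_span_pair.mp hv
    have e1 : (1 : ℤ) • u + (0 : ℤ) • v = (p' * p + q' * r) • u + (p' * q + q' * s) • v := by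
      calc (1 : ℤ) • u + (0 : ℤ) • v = u := by module
        _ = p' • u' + q' • v' := hp'.symm
        _ = p' • (p • u + q • v) + q' • (r • u + s • v) := by rw [hpq, hrs]
        _ = (p' * p + q' * r) • u + (p' * q + q' * s) • v := by module
    have e2 : (0 : ℤ) • u + (1 : ℤ) • v = (r' * p + s' * r) • u + (r' * q + s' * s) • v := by
      calc (0 : ℤ) • u + (1 : ℤ) • v = v := by module
        _ = r' • u' + s' • v' := hr'.symm
        _ = r' • (p • u + q • v) + s' • (r • u + s • v) := by rw [hpq, hrs]
        _ = (r' * p + s' * r) • u + (r' * q + s' * s) • v := by module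
    obtain ⟨e11, e12⟩ := pair_eq hli e1
    obtain ⟨e21, e22⟩ := pair_eq hli e2
    have hdet : (p * s - q * r) * (p' * s' - q' * r') = 1 := by
      linear_combination (-(r' * q + s' * s)) * e11 - e22 + (r' * p + s' * r) * e12
    have hw : wedge u' v' = (p * s - q * r) • wedge u v := by
      rw [← hpq, ← hrs]; exact wedge_comb p q r s u v
    rcases Int.isUnit_iff.mp (IsUnit.of_mul_eq_one _ hdet) with hD | hD
    · left; rw [hw, hD, one_smul]
    · right; rw [hw, hD, neg_one_smul]
  · -- coprimality
    rintro L u v hP ⟨hli, hsp⟩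
    exact gcd_wedge hP.2 hli hsp
  · -- injectivity
    rintro L L' u v u' v' hP hP' ⟨hli, hsp⟩ ⟨hli', hsp'⟩ hw
    ext x
    constructor
    · intro hx
      have hpc : pc (wedge u v) x := pc_wedge_of_mem (by rw [hsp]; exact hx)
      have hpc' : pc (wedge u' v') x := by
        rcases hw with h | h
        · rw [h]; exact hpc
        · rw [h]; exact pc_neg hpc
      exact mem_of_pc hli' hsp' hP'.2 hpc'
    · intro hx
      have hpc' : pc (wedge u' v') x := pc_wedge_of_mem (by rw [hsp']; exact hx)
      have hpc : pc (wedge u v) x := by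
        rcases hw with h | h
        · rw [← h]; exact hpc'
        · have h2 : wedge u v = -wedge u' v' := by rw [h, neg_neg]
          rw [h2]; exact pc_neg hpc'
      exact mem_of_pc hli hsp hP.2 hpc
  · -- surjectivity
    intro w hg hpl
    have hor : w 0 ≠ 0 ∨ w 1 ≠ 0 ∨ w 2 ≠ 0 ∨ w 3 ≠ 0 ∨ w 4 ≠ 0 ∨ w 5 ≠ 0 := by
      by_contra hc
      push_neg at hc
      obtain ⟨a0, a1, a2, a3, a4, a5⟩ := hc
      have hz : Finset.univ.gcd w = 0 :=
        Finset.gcd_eq_zero_iff.mpr fun k _ => by fin_cases k <;> assumption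
      rw [hg] at hz
      exact one_ne_zero hz
    rcases hor with hk | hk | hk | hk | hk | hk
    · -- pivot w 0 ≠ 0, pair (0, 1)
      refine surj_pivot (w := w) 0 1 hg (m := w 0) hk
        (u₀ := ![w 0, 0, -w 3, -w 4]) (v₀ := ![0, w 0, w 1, w 2]) ?_ ?_ ?_ ?_ ?_
      · refine pc_mem ⟨?_, ?_, ?_, ?_⟩
        · show w 0 * (-w 3) - w 1 * (0) + w 3 * (w 0) = 0
          ring
        · show w 0 * (-w 4) - w 2 * (0) + w 4 * (w 0) = 0
          ring
        · show w 1 * (-w 4) - w 2 * (-w 3) + w 5 * (w 0) = 0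
          linear_combination hpl
        · show w 3 * (-w 4) - w 4 * (-w 3) + w 5 * (0) = 0
          ring
      · refine pc_mem ⟨?_, ?_, ?_, ?_⟩
        · show w 0 * (w 1) - w 1 * (w 0) + w 3 * (0) = 0
          ring
        · show w 0 * (w 2) - w 2 * (w 0) + w 4 * (0) = 0
          ring
        · show w 1 * (w 2) - w 2 * (w 1) + w 5 * (0) = 0
          ring
        · show w 3 * (w 2) - w 4 * (w 1) + w 5 * (w 0) = 0
          linear_combination hpl
      · rw [LinearIndependent.pair_iff]
        intro s t hst
        have hA : s * (w 0) + t * (0) = 0 := congrFun hst 0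
        have hB : s * (0) + t * (w 0) = 0 := congrFun hst 1
        exact ⟨(mul_eq_zero.mp (show s * w 0 = 0 by linear_combination hA)).resolve_right hk,
          (mul_eq_zero.mp (show t * w 0 = 0 by linear_combination hB)).resolve_right hk⟩
      · refine funext6 ?_ ?_ ?_ ?_ ?_ ?_
        · show (w 0) * (w 0) - (0) * (0) = w 0 * w 0
          ring
        · show (w 0) * (w 1) - (-w 3) * (0) = w 0 * w 1
          ring
        · show (w 0) * (w 2) - (-w 4) * (0) = w 0 * w 2
          ring
        · show (0) * (w 1) - (-w 3) * (w 0) = w 0 * w 3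
          ring
        · show (0) * (w 2) - (-w 4) * (w 0) = w 0 * w 4
          ring
        · show (-w 3) * (w 2) - (-w 4) * (w 1) = w 0 * w 5
          linear_combination -hpl
      · intro x hx hzi hzj
        obtain ⟨h1, h2, h3, h4⟩ := pc_of_mem hx
        refine funext4 ?_ ?_ ?_ ?_
        · exact hzi
        · exact hzj
        · exact (mul_eq_zero.mp (show w 0 * x 2 = 0 by
            linear_combination h1 + (-w 3) * hzi + (w 1) * hzj)).resolve_left hk
        · exact (mul_eq_zero.mp (show w 0 * x 3 = 0 by
            linear_combination h2 + (-w 4) * hzi + (w 2) * hzj)).resolve_left hk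
    · -- pivot w 1 ≠ 0, pair (0, 2)
      refine surj_pivot (w := w) 0 2 hg (m := w 1) hk
        (u₀ := ![w 1, w 3, 0, -w 5]) (v₀ := ![0, w 0, w 1, w 2]) ?_ ?_ ?_ ?_ ?_
      · refine pc_mem ⟨?_, ?_, ?_, ?_⟩
        · show w 0 * (0) - w 1 * (w 3) + w 3 * (w 1) = 0
          ring
        · show w 0 * (-w 5) - w 2 * (w 3) + w 4 * (w 1) = 0
          linear_combination -hpl
        · show w 1 * (-w 5) - w 2 * (0) + w 5 * (w 1) = 0
          ring
        · show w 3 * (-w 5) - w 4 * (0) + w 5 * (w 3) = 0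
          ring
      · refine pc_mem ⟨?_, ?_, ?_, ?_⟩
        · show w 0 * (w 1) - w 1 * (w 0) + w 3 * (0) = 0
          ring
        · show w 0 * (w 2) - w 2 * (w 0) + w 4 * (0) = 0
          ring
        · show w 1 * (w 2) - w 2 * (w 1) + w 5 * (0) = 0
          ring
        · show w 3 * (w 2) - w 4 * (w 1) + w 5 * (w 0) = 0
          linear_combination hpl
      · rw [LinearIndependent.pair_iff]
        intro s t hst
        have hA : s * (w 1) + t * (0) = 0 := congrFun hst 0
        have hB : s * (0) + t * (w 1) = 0 := congrFun hst 2
        exact ⟨(mul_eq_zero.mp (show s * w 1 = 0 by linear_combination hA)).resolve_right hk,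
          (mul_eq_zero.mp (show t * w 1 = 0 by linear_combination hB)).resolve_right hk⟩
      · refine funext6 ?_ ?_ ?_ ?_ ?_ ?_
        · show (w 1) * (w 0) - (w 3) * (0) = w 1 * w 0
          ring
        · show (w 1) * (w 1) - (0) * (0) = w 1 * w 1
          ring
        · show (w 1) * (w 2) - (-w 5) * (0) = w 1 * w 2
          ring
        · show (w 3) * (w 1) - (0) * (w 0) = w 1 * w 3
          ring
        · show (w 3) * (w 2) - (-w 5) * (w 0) = w 1 * w 4
          linear_combination hpl
        · show (0) * (w 2) - (-w 5) * (w 1) = w 1 * w 5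
          ring
      · intro x hx hzi hzj
        obtain ⟨h1, h2, h3, h4⟩ := pc_of_mem hx
        refine funext4 ?_ ?_ ?_ ?_
        · exact hzi
        · exact (mul_eq_zero.mp (show w 1 * x 1 = 0 by
            linear_combination -h1 + (w 3) * hzi + (w 0) * hzj)).resolve_left hk
        · exact hzj
        · exact (mul_eq_zero.mp (show w 1 * x 3 = 0 by
            linear_combination h3 + (-w 5) * hzi + (w 2) * hzj)).resolve_left hk
    · -- pivot w 2 ≠ 0, pair (0, 3)
      refine surj_pivot (w := w) 0 3 hg (m := w 2) hk
        (u₀ := ![w 2, w 4, w 5, 0]) (v₀ := ![0, w 0, w 1, w 2]) ?_ ?_ ?_ ?_ ?_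
      · refine pc_mem ⟨?_, ?_, ?_, ?_⟩
        · show w 0 * (w 5) - w 1 * (w 4) + w 3 * (w 2) = 0
          linear_combination hpl
        · show w 0 * (0) - w 2 * (w 4) + w 4 * (w 2) = 0
          ring
        · show w 1 * (0) - w 2 * (w 5) + w 5 * (w 2) = 0
          ring
        · show w 3 * (0) - w 4 * (w 5) + w 5 * (w 4) = 0
          ring
      · refine pc_mem ⟨?_, ?_, ?_, ?_⟩
        · show w 0 * (w 1) - w 1 * (w 0) + w 3 * (0) = 0
          ring
        · show w 0 * (w 2) - w 2 * (w 0) + w 4 * (0) = 0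
          ring
        · show w 1 * (w 2) - w 2 * (w 1) + w 5 * (0) = 0
          ring
        · show w 3 * (w 2) - w 4 * (w 1) + w 5 * (w 0) = 0
          linear_combination hpl
      · rw [LinearIndependent.pair_iff]
        intro s t hst
        have hA : s * (w 2) + t * (0) = 0 := congrFun hst 0
        have hB : s * (0) + t * (w 2) = 0 := congrFun hst 3
        exact ⟨(mul_eq_zero.mp (show s * w 2 = 0 by linear_combination hA)).resolve_right hk,
          (mul_eq_zero.mp (show t * w 2 = 0 by linear_combination hB)).resolve_right hk⟩
      · refine funext6 ?_ ?_ ?_ ?_ ?_ ?_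
        · show (w 2) * (w 0) - (w 4) * (0) = w 2 * w 0
          ring
        · show (w 2) * (w 1) - (w 5) * (0) = w 2 * w 1
          ring
        · show (w 2) * (w 2) - (0) * (0) = w 2 * w 2
          ring
        · show (w 4) * (w 1) - (w 5) * (w 0) = w 2 * w 3
          linear_combination -hpl
        · show (w 4) * (w 2) - (0) * (w 0) = w 2 * w 4
          ring
        · show (w 5) * (w 2) - (0) * (w 1) = w 2 * w 5
          ring
      · intro x hx hzi hzj
        obtain ⟨h1, h2, h3, h4⟩ := pc_of_mem hx
        refine funext4 ?_ ?_ ?_ ?_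
        · exact hzi
        · exact (mul_eq_zero.mp (show w 2 * x 1 = 0 by
            linear_combination -h2 + (w 4) * hzi + (w 0) * hzj)).resolve_left hk
        · exact (mul_eq_zero.mp (show w 2 * x 2 = 0 by
            linear_combination -h3 + (w 5) * hzi + (w 1) * hzj)).resolve_left hk
        · exact hzj
    · -- pivot w 3 ≠ 0, pair (1, 2)
      refine surj_pivot (w := w) 1 2 hg (m := w 3) hk
        (u₀ := ![w 1, w 3, 0, -w 5]) (v₀ := ![-w 0, 0, w 3, w 4]) ?_ ?_ ?_ ?_ ?_
      · refine pc_mem ⟨?_, ?_, ?_, ?_⟩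
        · show w 0 * (0) - w 1 * (w 3) + w 3 * (w 1) = 0
          ring
        · show w 0 * (-w 5) - w 2 * (w 3) + w 4 * (w 1) = 0
          linear_combination -hpl
        · show w 1 * (-w 5) - w 2 * (0) + w 5 * (w 1) = 0
          ring
        · show w 3 * (-w 5) - w 4 * (0) + w 5 * (w 3) = 0
          ring
      · refine pc_mem ⟨?_, ?_, ?_, ?_⟩
        · show w 0 * (w 3) - w 1 * (0) + w 3 * (-w 0) = 0
          ring
        · show w 0 * (w 4) - w 2 * (0) + w 4 * (-w 0) = 0
          ring
        · show w 1 * (w 4) - w 2 * (w 3) + w 5 * (-w 0) = 0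
          linear_combination -hpl
        · show w 3 * (w 4) - w 4 * (w 3) + w 5 * (0) = 0
          ring
      · rw [LinearIndependent.pair_iff]
        intro s t hst
        have hA : s * (w 3) + t * (0) = 0 := congrFun hst 1
        have hB : s * (0) + t * (w 3) = 0 := congrFun hst 2
        exact ⟨(mul_eq_zero.mp (show s * w 3 = 0 by linear_combination hA)).resolve_right hk,
          (mul_eq_zero.mp (show t * w 3 = 0 by linear_combination hB)).resolve_right hk⟩
      · refine funext6 ?_ ?_ ?_ ?_ ?_ ?_
        · show (w 1) * (0) - (w 3) * (-w 0) = w 3 * w 0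
          ring
        · show (w 1) * (w 3) - (0) * (-w 0) = w 3 * w 1
          ring
        · show (w 1) * (w 4) - (-w 5) * (-w 0) = w 3 * w 2
          linear_combination -hpl
        · show (w 3) * (w 3) - (0) * (0) = w 3 * w 3
          ring
        · show (w 3) * (w 4) - (-w 5) * (0) = w 3 * w 4
          ring
        · show (0) * (w 4) - (-w 5) * (w 3) = w 3 * w 5
          ring
      · intro x hx hzi hzj
        obtain ⟨h1, h2, h3, h4⟩ := pc_of_mem hx
        refine funext4 ?_ ?_ ?_ ?_
        · exact (mul_eq_zero.mp (show w 3 * x 0 = 0 by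
            linear_combination h1 + (w 1) * hzi + (-w 0) * hzj)).resolve_left hk
        · exact hzi
        · exact hzj
        · exact (mul_eq_zero.mp (show w 3 * x 3 = 0 by
            linear_combination h4 + (-w 5) * hzi + (w 4) * hzj)).resolve_left hk
    · -- pivot w 4 ≠ 0, pair (1, 3)
      refine surj_pivot (w := w) 1 3 hg (m := w 4) hk
        (u₀ := ![w 2, w 4, w 5, 0]) (v₀ := ![-w 0, 0, w 3, w 4]) ?_ ?_ ?_ ?_ ?_
      · refine pc_mem ⟨?_, ?_, ?_, ?_⟩
        · show w 0 * (w 5) - w 1 * (w 4) + w 3 * (w 2) = 0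
          linear_combination hpl
        · show w 0 * (0) - w 2 * (w 4) + w 4 * (w 2) = 0
          ring
        · show w 1 * (0) - w 2 * (w 5) + w 5 * (w 2) = 0
          ring
        · show w 3 * (0) - w 4 * (w 5) + w 5 * (w 4) = 0
          ring
      · refine pc_mem ⟨?_, ?_, ?_, ?_⟩
        · show w 0 * (w 3) - w 1 * (0) + w 3 * (-w 0) = 0
          ring
        · show w 0 * (w 4) - w 2 * (0) + w 4 * (-w 0) = 0
          ring
        · show w 1 * (w 4) - w 2 * (w 3) + w 5 * (-w 0) = 0
          linear_combination -hpl
        · show w 3 * (w 4) - w 4 * (w 3) + w 5 * (0) = 0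
          ring
      · rw [LinearIndependent.pair_iff]
        intro s t hst
        have hA : s * (w 4) + t * (0) = 0 := congrFun hst 1
        have hB : s * (0) + t * (w 4) = 0 := congrFun hst 3
        exact ⟨(mul_eq_zero.mp (show s * w 4 = 0 by linear_combination hA)).resolve_right hk,
          (mul_eq_zero.mp (show t * w 4 = 0 by linear_combination hB)).resolve_right hk⟩
      · refine funext6 ?_ ?_ ?_ ?_ ?_ ?_
        · show (w 2) * (0) - (w 4) * (-w 0) = w 4 * w 0
          ring
        · show (w 2) * (w 3) - (w 5) * (-w 0) = w 4 * w 1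
          linear_combination hpl
        · show (w 2) * (w 4) - (0) * (-w 0) = w 4 * w 2
          ring
        · show (w 4) * (w 3) - (w 5) * (0) = w 4 * w 3
          ring
        · show (w 4) * (w 4) - (0) * (0) = w 4 * w 4
          ring
        · show (w 5) * (w 4) - (0) * (w 3) = w 4 * w 5
          ring
      · intro x hx hzi hzj
        obtain ⟨h1, h2, h3, h4⟩ := pc_of_mem hx
        refine funext4 ?_ ?_ ?_ ?_
        · exact (mul_eq_zero.mp (show w 4 * x 0 = 0 by
            linear_combination h2 + (w 2) * hzi + (-w 0) * hzj)).resolve_left hk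
        · exact hzi
        · exact (mul_eq_zero.mp (show w 4 * x 2 = 0 by
            linear_combination -h4 + (w 5) * hzi + (w 3) * hzj)).resolve_left hk
        · exact hzj
    · -- pivot w 5 ≠ 0, pair (2, 3)
      refine surj_pivot (w := w) 2 3 hg (m := w 5) hk
        (u₀ := ![w 2, w 4, w 5, 0]) (v₀ := ![-w 1, -w 3, 0, w 5]) ?_ ?_ ?_ ?_ ?_
      · refine pc_mem ⟨?_, ?_, ?_, ?_⟩
        · show w 0 * (w 5) - w 1 * (w 4) + w 3 * (w 2) = 0
          linear_combination hpl
        · show w 0 * (0) - w 2 * (w 4) + w 4 * (w 2) = 0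
          ring
        · show w 1 * (0) - w 2 * (w 5) + w 5 * (w 2) = 0
          ring
        · show w 3 * (0) - w 4 * (w 5) + w 5 * (w 4) = 0
          ring
      · refine pc_mem ⟨?_, ?_, ?_, ?_⟩
        · show w 0 * (0) - w 1 * (-w 3) + w 3 * (-w 1) = 0
          ring
        · show w 0 * (w 5) - w 2 * (-w 3) + w 4 * (-w 1) = 0
          linear_combination hpl
        · show w 1 * (w 5) - w 2 * (0) + w 5 * (-w 1) = 0
          ring
        · show w 3 * (w 5) - w 4 * (0) + w 5 * (-w 3) = 0
          ring
      · rw [LinearIndependent.pair_iff]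
        intro s t hst
        have hA : s * (w 5) + t * (0) = 0 := congrFun hst 2
        have hB : s * (0) + t * (w 5) = 0 := congrFun hst 3
        exact ⟨(mul_eq_zero.mp (show s * w 5 = 0 by linear_combination hA)).resolve_right hk,
          (mul_eq_zero.mp (show t * w 5 = 0 by linear_combination hB)).resolve_right hk⟩
      · refine funext6 ?_ ?_ ?_ ?_ ?_ ?_
        · show (w 2) * (-w 3) - (w 4) * (-w 1) = w 5 * w 0
          linear_combination -hpl
        · show (w 2) * (0) - (w 5) * (-w 1) = w 5 * w 1
          ring
        · show (w 2) * (w 5) - (0) * (-w 1) = w 5 * w 2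
          ring
        · show (w 4) * (0) - (w 5) * (-w 3) = w 5 * w 3
          ring
        · show (w 4) * (w 5) - (0) * (-w 3) = w 5 * w 4
          ring
        · show (w 5) * (w 5) - (0) * (0) = w 5 * w 5
          ring
      · intro x hx hzi hzj
        obtain ⟨h1, h2, h3, h4⟩ := pc_of_mem hx
        refine funext4 ?_ ?_ ?_ ?_
        · exact (mul_eq_zero.mp (show w 5 * x 0 = 0 by
            linear_combination h3 + (w 2) * hzi + (-w 1) * hzj)).resolve_left hk
        · exact (mul_eq_zero.mp (show w 5 * x 1 = 0 by
            linear_combination h4 + (w 4) * hzi + (-w 3) * hzj)).resolve_left hk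
        · exact hzi
        · exact hzj
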